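/- arXiv:1010.0516 — 5 statements merged into one kernel-verified Lean document; each statement's English description precedes it below -/
import Mathlib

section
/- Let n, m be natural numbers with n − m ≠ −1 (superdimension computed in ℤ), and let Γ, Γ′ be supersymmetric Christoffel arrays on N = n+m indices. Then the fundamental descriptive invariants coincide, Π^k_{ij} = Π′^k_{ij} for all i, j, k, if and only if there exists α : {1,…,N} → ℝ such that Γ′ is projectively related to Γ by α. (Pointwise form of the characterization of projective equivalence of torsion-free superconnections.) -/
noncomputable section

namespace SuperProj

/-- The sign `(−1)^{p(i)}` for the parity function `p` on `Fin (n+m)`: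
`p(i) = 0` for `i < n` (even indices) and `p(i) = 1` for `i ≥ n` (odd indices). -/
def psign (n m : ℕ) (i : Fin (n + m)) : ℝ := if (i : ℕ) < n then 1 else -1

/-- The sign `(−1)^{p(i)p(j)}`. -/
def ppsign (n m : ℕ) (i j : Fin (n + m)) : ℝ :=
  if n ≤ (i : ℕ) ∧ n ≤ (j : ℕ) then -1 else 1

/-- Kronecker delta `δ^k_j` as a real number. -/
def kron {N : ℕ} (j k : Fin N) : ℝ := if j = k then 1 else 0

/-- A Christoffel array `Γ i j k = Γ^k_{ij}` is supersymmetric (torsion-free) if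
`Γ^k_{ji} = (−1)^{p(i)p(j)} Γ^k_{ij}`. -/
def Supersym (n m : ℕ) (Γ : Fin (n + m) → Fin (n + m) → Fin (n + m) → ℝ) : Prop :=
  ∀ i j k, Γ j i k = ppsign n m i j * Γ i j k

/-- `Γ'` is projectively related to `Γ` by `α` if
`Γ'^k_{ij} = Γ^k_{ij} + α_i δ^k_j + (−1)^{p(i)p(j)} α_j δ^k_i`. -/
def ProjRel (n m : ℕ) (Γ Γ' : Fin (n + m) → Fin (n + m) → Fin (n + m) → ℝ)
    (α : Fin (n + m) → ℝ) : Prop :=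
  ∀ i j k, Γ' i j k = Γ i j k + α i * kron j k + ppsign n m i j * α j * kron i k

/-- The supertrace contraction `Σ_s (−1)^{p(s)} Γ^s_{is}`. -/
def strace (n m : ℕ) (Γ : Fin (n + m) → Fin (n + m) → Fin (n + m) → ℝ)
    (i : Fin (n + m)) : ℝ := ∑ s, psign n m s * Γ i s s

/-- The fundamental descriptive invariant
`Π^k_{ij} = Γ^k_{ij} − (1/(n−m+1)) ( Σ_s (−1)^{p(s)} Γ^s_{is} δ^k_j
  + (−1)^{p(i)p(j)} Σ_s (−1)^{p(s)} Γ^s_{js} δ^k_i )`. -/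
def FDI (n m : ℕ) (Γ : Fin (n + m) → Fin (n + m) → Fin (n + m) → ℝ)
    (i j k : Fin (n + m)) : ℝ :=
  Γ i j k - (1 / ((n : ℝ) - (m : ℝ) + 1)) *
    (strace n m Γ i * kron j k + ppsign n m i j * strace n m Γ j * kron i k)

end SuperProj

namespace SuperProjAux

open SuperProj

lemma sum_psign (n m : ℕ) : ∑ s : Fin (n + m), psign n m s = (n : ℝ) - m := by
  rw [Fin.sum_univ_add]
  have h1 : ∀ i : Fin n, psign n m (Fin.castAdd m i) = 1 := by
    intro i; simp [psign, i.isLt]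
  have h2 : ∀ i : Fin m, psign n m (Fin.natAdd n i) = -1 := by
    intro i; simp [psign]
  simp [h1, h2]; ring

lemma psign_mul_ppsign (n m : ℕ) (i : Fin (n + m)) :
    psign n m i * ppsign n m i i = 1 := by
  by_cases hi : (i : ℕ) < n
  · simp [psign, ppsign, hi, hi.not_ge]
  · simp [psign, ppsign, hi, not_lt.mp hi]

lemma strace_proj (n m : ℕ) (Γ Γ' : Fin (n + m) → Fin (n + m) → Fin (n + m) → ℝ)
    (α : Fin (n + m) → ℝ) (hP : ProjRel n m Γ Γ' α) (i : Fin (n + m)) :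
    strace n m Γ' i = strace n m Γ i + ((n : ℝ) - m + 1) * α i := by
  unfold strace
  have : ∀ s : Fin (n + m), psign n m s * Γ' i s s
      = psign n m s * Γ i s s + psign n m s * α i
        + (if i = s then psign n m s * (ppsign n m i s * α s) else 0) := by
    intro s
    rw [hP i s s]
    simp only [kron, if_pos rfl]
    by_cases hs : i = s <;> simp [hs] <;> ring
  simp only [this]
  rw [Finset.sum_add_distrib, Finset.sum_add_distrib, Finset.sum_ite_eq,
    if_pos (Finset.mem_univ i), ← Finset.sum_mul, sum_psign]
  have h3 : psign n m i * (ppsign n m i i * α i) = α i := by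
    rw [← mul_assoc, psign_mul_ppsign, one_mul]
  rw [h3]; ring

end SuperProjAux

open SuperProj SuperProjAux in
/-- for `n − m ≠ −1` and supersymmetric Christoffel arrays `Γ`, `Γ'`,
the fundamental descriptive invariants coincide iff `Γ'` is projectively related to `Γ`
by some `α`. -/
theorem fdi_eq_iff_exists_projRel (n m : ℕ) (h : (n : ℤ) - (m : ℤ) ≠ -1)
    (Γ Γ' : Fin (n + m) → Fin (n + m) → Fin (n + m) → ℝ)
    (hΓ : Supersym n m Γ) (hΓ' : Supersym n m Γ') :
    (∀ i j k, FDI n m Γ i j k = FDI n m Γ' i j k) ↔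
      ∃ α : Fin (n + m) → ℝ, ProjRel n m Γ Γ' α := by
  have hD : ((n : ℝ) - m + 1) ≠ 0 := by
    intro heq
    apply h
    have : ((n : ℤ) : ℝ) - ((m : ℤ) : ℝ) = -1 := by push_cast; linarith
    exact_mod_cast this
  constructor
  · intro hFDI
    refine ⟨fun i => (strace n m Γ' i - strace n m Γ i) / ((n : ℝ) - m + 1), ?_⟩
    intro i j k
    have := hFDI i j k
    unfold FDI at this
    field_simp at this ⊢
    linarith
  · rintro ⟨α, hP⟩
    intro i j k
    unfold FDI
    rw [hP i j k, strace_proj n m Γ Γ' α hP i, strace_proj n m Γ Γ' α hP j]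
    field_simp
    ring
end
end

section
/- Let n, m be natural numbers with n − m = −1 (i.e. m = n+1), N = n+m, and let Γ, Γ′ be Christoffel arrays such that Γ′ is projectively related to Γ by some α : {1,…,N} → ℝ. Then the supertrace-contracted Christoffel symbols are projectively invariant: for every index i, Σ_s (−1)^{p(s)} Γ′^s_{is} = Σ_s (−1)^{p(s)} Γ^s_{is}. (This is the algebraic reason why, in superdimension −1, the covariant derivative of densities, and hence the order-one quantization formula Q(∇,S)(f) = ⟨S,∇f⟩ + t⟨Div S, f⟩, is projectively invariant.) -/
noncomputable section

open SuperProj in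
/-- in superdimension `n − m = −1`, the supertrace-contracted Christoffel
symbols are projectively invariant: if `Γ'` is projectively related to `Γ` by some `α`,
then `Σ_s (−1)^{p(s)} Γ'^s_{is} = Σ_s (−1)^{p(s)} Γ^s_{is}` for every `i`. -/
theorem strace_projectively_invariant_of_superdim_neg_one (n m : ℕ)
    (h : (n : ℤ) - (m : ℤ) = -1)
    (Γ Γ' : Fin (n + m) → Fin (n + m) → Fin (n + m) → ℝ)
    (α : Fin (n + m) → ℝ) (hrel : ProjRel n m Γ Γ' α) :
    ∀ i : Fin (n + m), strace n m Γ' i = strace n m Γ i := by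
  intro i
  have hm : m = n + 1 := by omega
  subst hm
  unfold strace
  have hrw : ∀ s : Fin (n + (n+1)), psign n (n+1) s * Γ' i s s
      = psign n (n+1) s * Γ i s s
        + psign n (n+1) s * α i
        + (if i = s then psign n (n+1) s * ppsign n (n+1) i s * α s else 0) := by
    intro s
    rw [hrel i s s]
    by_cases hs : i = s <;> simp [kron, hs] <;> ring
  rw [Finset.sum_congr rfl (fun s _ => hrw s)]
  rw [Finset.sum_add_distrib, Finset.sum_add_distrib]
  have h1 : ∑ s : Fin (n + (n+1)), psign n (n+1) s * α i = -α i := by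
    rw [← Finset.sum_mul]
    have hsum : ∑ s : Fin (n + (n+1)), psign n (n+1) s = -1 := by
      unfold psign
      rw [Fin.sum_univ_eq_sum_range (fun k => if k < n then (1:ℝ) else -1)]
      rw [Finset.sum_range_add]
      have e1 : (∑ x ∈ Finset.range n, if x < n then (1:ℝ) else -1) = n := by
        rw [Finset.sum_congr rfl (fun x hx => if_pos (Finset.mem_range.mp hx))]
        simp
      have e2 : (∑ x ∈ Finset.range (n+1), if n + x < n then (1:ℝ) else -1)
          = -(n+1 : ℝ) := by
        rw [Finset.sum_congr rfl (fun x _ => if_neg (by omega))]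
        simp
      rw [e1, e2]; ring
    rw [hsum]; ring
  have h2 : (∑ s : Fin (n + (n+1)),
      if i = s then psign n (n+1) s * ppsign n (n+1) i s * α s else 0) = α i := by
    rw [Finset.sum_ite_eq]
    simp only [Finset.mem_univ, if_true]
    unfold psign ppsign
    by_cases hi : (i : ℕ) < n
    · rw [if_pos hi, if_neg (by omega)]; ring
    · rw [if_neg hi, if_pos ⟨by omega, by omega⟩]; ring
  rw [h1, h2]; ring
end
end

section
/- In the classical local model (m = 0, n ≥ 2): let φ : U → V be a smooth diffeomorphism between open subsets of ℝⁿ, let ∇ be a smooth torsion-free connection on V with Christoffel symbols Γ, and let φ*∇ be the pullback connection on U (determined by Dφ_x((φ*∇)_X Y)(x) = (∇_{φ_*X} φ_*Y)(φ(x)) for all vector fields X, Y on U, where φ_*Z = Dφ(Z) ∘ φ⁻¹). Define the lifted map φ̃ : ℝ × U → ℝ × V by φ̃(x⁰, x) = (x⁰ + log|det Dφ_x|, φ(x)). Then for every smooth vector field X on V, the horizontal lift (φ*X)^h taken with respect to φ*∇ is φ̃-related to the horizontal lift X^h taken with respect to ∇: Dφ̃_{(x⁰,x)}( (φ*X)^h(x⁰,x)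 ) = X^h( φ̃(x⁰,x) ) for all (x⁰, x) ∈ ℝ × U, where φ*X = (Dφ)⁻¹(X ∘ φ). (Naturality/well-definedness of the horizontal lift, proved via the derivative formula for the determinant/Berezinian.) -/
noncomputable section

namespace ThomasLocal

open Finset

/-- Points of the base `ℝⁿ`. -/
abbrev Esp (n : ℕ) := Fin n → ℝ

/-- Points of the Thomas space `ℝ × ℝⁿ` (first coordinate is `x⁰`). -/
abbrev Tsp (n : ℕ) := ℝ × (Fin n → ℝ)

/-- Partial derivative `∂_i f` on `ℝⁿ`. -/
def pdE {n : ℕ} (f : Esp n → ℝ) (i : Fin n) (x : Esp n) : ℝ :=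
  fderiv ℝ f x (Pi.single i 1)

/-- The coordinate directions on the Thomas space: `none` is the `x⁰`-direction `∂_0`,
`some i` is the direction `∂_i`. -/
def dirT {n : ℕ} : Option (Fin n) → Tsp n
  | none => (1, 0)
  | some i => (0, Pi.single i 1)

/-- Partial derivative `∂_a f` on the Thomas space, `a : Option (Fin n)`. -/
def pdT {n : ℕ} (f : Tsp n → ℝ) (a : Option (Fin n)) (p : Tsp n) : ℝ :=
  fderiv ℝ f p (dirT a)

/-- Christoffel symbols of a connection on (an open subset of) `ℝⁿ`;
convention: `Γ x i j k = Γ^k_{ij}(x)`. -/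
abbrev Chr (n : ℕ) := Esp n → Fin n → Fin n → Fin n → ℝ

/-- The contracted symbol `c_i = Σ_s Γ^s_{is}`. -/
def csum {n : ℕ} (Γ : Chr n) (x : Esp n) (i : Fin n) : ℝ := ∑ s, Γ x i s s

/-- `Π^k_{ij} = Γ^k_{ij} − (1/(n+1)) (Σ_s Γ^s_{is} δ^k_j + Σ_s Γ^s_{js} δ^k_i)`. -/
def PiInv {n : ℕ} (Γ : Chr n) (x : Esp n) (i j k : Fin n) : ℝ :=
  Γ x i j k - (1 / ((n : ℝ) + 1)) *
    (csum Γ x i * (if j = k then (1 : ℝ) else 0) +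
      csum Γ x j * (if i = k then (1 : ℝ) else 0))

/-- `Γ̃^0_{ij} = ((n+1)/(n−1)) (Σ_q ∂_q Π^q_{ij} − Σ_{p,q} Π^p_{qi} Π^q_{pj})`. -/
def Γtop {n : ℕ} (Γ : Chr n) (x : Esp n) (i j : Fin n) : ℝ :=
  (((n : ℝ) + 1) / ((n : ℝ) - 1)) *
    ((∑ q, pdE (fun y => PiInv Γ y i j q) q x) -
      ∑ p, ∑ q, PiInv Γ x q i p * PiInv Γ x p j q)

/-- The Christoffel symbols of the Thomas connection on `ℝ × ℝⁿ`;
convention: `ΓT Γ x a b c = Γ̃^c_{ab}` (index `none` is `0`, `some i` is `i`):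
`Γ̃^k_{ij} = Π^k_{ij}`, `Γ̃^c_{0a} = Γ̃^c_{a0} = −δ^c_a/(n+1)`, `Γ̃^0_{ij}` as in `Γtop`. -/
def ΓT {n : ℕ} (Γ : Chr n) (x : Esp n) :
    Option (Fin n) → Option (Fin n) → Option (Fin n) → ℝ
  | none, b, c => if b = c then -1 / ((n : ℝ) + 1) else 0
  | some i, none, c => if c = some i then -1 / ((n : ℝ) + 1) else 0
  | some i, some j, none => Γtop Γ x i j
  | some i, some j, some k => PiInv Γ x i j k

/-- Vector fields on (an open subset of) `ℝⁿ`, in components: `X x i = X^i(x)`. -/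
abbrev VF (n : ℕ) := Esp n → Fin n → ℝ

/-- Covariant derivative `∇_X W = (X^i ∂_i W^k + X^i W^j Γ^k_{ij}) ∂_k`. -/
def covD {n : ℕ} (Γ : Chr n) (X W : VF n) : VF n := fun x k =>
  (∑ i, X x i * pdE (fun y => W y k) i x) + ∑ i, ∑ j, X x i * W x j * Γ x i j k

/-- Lie bracket `[X, Y]` of vector fields. -/
def lieB {n : ℕ} (X Y : VF n) : VF n := fun x k =>
  ∑ i, (X x i * pdE (fun y => Y y k) i x - Y x i * pdE (fun y => X y k) i x)

/-- Curvature `R(X,Y)Z = ∇_X ∇_Y Z − ∇_Y ∇_X Z − ∇_{[X,Y]} Z`. -/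
def curv {n : ℕ} (Γ : Chr n) (X Y Z : VF n) : VF n := fun x k =>
  covD Γ X (covD Γ Y Z) x k - covD Γ Y (covD Γ X Z) x k - covD Γ (lieB X Y) Z x k

/-- The coordinate vector field `∂_i`. -/
def coordVF {n : ℕ} (i : Fin n) : VF n := fun _ j => if i = j then 1 else 0

/-- `Ric(Z,Y) = tr (X ↦ R(X,Y)Z)`. -/
def RicT {n : ℕ} (Γ : Chr n) (Z Y : VF n) (x : Esp n) : ℝ :=
  ∑ i, curv Γ (coordVF i) Y Z x i

/-- `strR(X,Y) = tr (Z ↦ R(X,Y)Z)`. -/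
def strR {n : ℕ} (Γ : Chr n) (X Y : VF n) (x : Esp n) : ℝ :=
  ∑ k, curv Γ X Y (coordVF k) x k

/-- `r(X,Y) = (Ric(Y,X) + Ric(X,Y)) / (2(n−1))`. -/
def rT {n : ℕ} (Γ : Chr n) (X Y : VF n) (x : Esp n) : ℝ :=
  (RicT Γ Y X x + RicT Γ X Y x) / (2 * ((n : ℝ) - 1))

/-- Vector fields on the Thomas space `ℝ × ℝⁿ`, in components indexed by
`Option (Fin n)`. -/
abbrev VT (n : ℕ) := Tsp n → Option (Fin n) → ℝ

/-- Horizontal lift `X^h = −(X^i Γ^s_{is}) ∂_0 + X^i ∂_i` of a vector field. -/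
def hlift {n : ℕ} (Γ : Chr n) (X : VF n) : VT n := fun p a =>
  match a with
  | none => -∑ i, X p.2 i * csum Γ p.2 i
  | some i => X p.2 i

/-- The Euler vector field `E = ∂_0`. -/
def EulerV {n : ℕ} : VT n := fun _ a => match a with | none => 1 | some _ => 0

/-- Covariant derivative on the Thomas space with respect to the Thomas connection:
`(∇̃_Z W)^c = Z^a ∂_a W^c + Z^a W^b Γ̃^c_{ab}`. -/
def covDT {n : ℕ} (Γ : Chr n) (Z W : VT n) (p : Tsp n) (c : Option (Fin n)) : ℝ :=
  (∑ a, Z p a * pdT (fun q => W q c) a p) + ∑ a, ∑ b, Z p a * W p b * ΓT Γ p.2 a b c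

end ThomasLocal

namespace ThomasLocal

/-- The Jacobian matrix `(Dφ_x)^i_j = ∂_j φ^i (x)` of a map `φ : ℝⁿ → ℝⁿ`. -/
def Jmat {n : ℕ} (φ : Esp n → Esp n) (x : Esp n) : Matrix (Fin n) (Fin n) ℝ :=
  Matrix.of fun i j => pdE (fun y => φ y i) j x

/-- The pullback `φ*X = (Dφ)⁻¹ (X ∘ φ)` of a vector field. -/
def pbVF {n : ℕ} (φ : Esp n → Esp n) (X : VF n) : VF n :=
  fun x => ((Jmat φ x)⁻¹).mulVec (X (φ x))

/-- The pushforward `φ_*X = Dφ(X) ∘ φ⁻¹` of a vector field (`ψ = φ⁻¹`). -/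
def pushVF {n : ℕ} (φ ψ : Esp n → Esp n) (X : VF n) : VF n :=
  fun y => (Jmat φ (ψ y)).mulVec (X (ψ y))

/-- The lifted map `φ̃(x⁰, x) = (x⁰ + log |det Dφ_x|, φ(x))` between Thomas spaces. -/
def tlift {n : ℕ} (φ : Esp n → Esp n) : Tsp n → Tsp n :=
  fun p => (p.1 + Real.log |(Jmat φ p.2).det|, φ p.2)

/-- The horizontal lift `X^h = −(X^i Γ^s_{is}) ∂_0 + X^i ∂_i` of a vector field, as an
element of `ℝ × ℝⁿ` at the point `p`. -/
def hvec {n : ℕ} (Γ : Chr n) (X : VF n) (p : Tsp n) : Tsp n :=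
  (-∑ i, X p.2 i * csum Γ p.2 i, fun i => X p.2 i)

end ThomasLocal

namespace ThomasAux
open Finset Matrix

/-- The determinant as a continuous multilinear map in the rows. -/
noncomputable def detCML (n : ℕ) :
    ContinuousMultilinearMap ℝ (fun _ : Fin n => (Fin n → ℝ)) ℝ :=
  MultilinearMap.mkContinuous
    (Matrix.detRowAlternating (n := Fin n) (R := ℝ)).toMultilinearMap
    (Nat.factorial n) (by
      intro m
      show ‖Matrix.det (Matrix.of m)‖ ≤ _
      rw [Matrix.det_apply]
      refine (norm_sum_le _ _).trans ?_
      have hterm : ∀ σ : Equiv.Perm (Fin n),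
          ‖Equiv.Perm.sign σ • ∏ i, Matrix.of m (σ i) i‖ ≤ ∏ i, ‖m i‖ := by
        intro σ
        have h1 : ‖Equiv.Perm.sign σ • ∏ i, Matrix.of m (σ i) i‖
            = ‖∏ i, m (σ i) i‖ := by
          rcases Int.units_eq_one_or (Equiv.Perm.sign σ) with h | h <;>
            simp [h, Matrix.of_apply, norm_neg]
        rw [h1]
        calc ‖∏ i, m (σ i) i‖ = ∏ i, ‖m (σ i) i‖ := by
              simp [Real.norm_eq_abs, Finset.abs_prod]
          _ ≤ ∏ i, ‖m (σ i)‖ :=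
              Finset.prod_le_prod (fun i _ => norm_nonneg _)
                (fun i _ => norm_le_pi_norm (m (σ i)) i)
          _ = ∏ i, ‖m i‖ := Equiv.prod_comp σ (fun i => ‖m i‖)
      calc ∑ σ : Equiv.Perm (Fin n), ‖Equiv.Perm.sign σ • ∏ i, Matrix.of m (σ i) i‖
          ≤ ∑ _σ : Equiv.Perm (Fin n), ∏ i, ‖m i‖ :=
            Finset.sum_le_sum fun σ _ => hterm σ
        _ = (Nat.factorial n) * ∏ i, ‖m i‖ := by
            rw [Finset.sum_const, Finset.card_univ, Fintype.card_perm, Fintype.card_fin,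
              nsmul_eq_mul]
        _ ≤ _ := le_refl _)

lemma detCML_apply {n : ℕ} (m : Fin n → Fin n → ℝ) :
    detCML n m = Matrix.det (Matrix.of m) := rfl

/-- Row expansion of the determinant after replacing one row. -/
lemma det_updateRow_expand {n : ℕ} (A : Matrix (Fin n) (Fin n) ℝ) (i : Fin n)
    (v : Fin n → ℝ) :
    (A.updateRow i v).det = ∑ j, v j * A.adjugate j i := by
  have h1 : (A.updateRow i v).det = Aᵀ.cramer v i := by
    rw [Matrix.cramer_apply, Matrix.updateCol_transpose, Matrix.det_transpose]
  rw [h1]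
  have h2 : v = ∑ j, Pi.single j (v j) := (Finset.univ_sum_single v).symm
  conv_lhs => rw [h2]
  rw [map_sum, Finset.sum_apply]
  refine Finset.sum_congr rfl fun j _ => ?_
  have h3 : (Pi.single j (v j) : Fin n → ℝ) = v j • (Pi.single j (1 : ℝ) : Fin n → ℝ) := by
    rw [← Pi.single_smul, smul_eq_mul, mul_one]
  rw [h3, _root_.map_smul]
  simp [Matrix.adjugate_def, smul_eq_mul]

/-- A continuous linear functional/map on `Fin n → ℝ` is determined by its values on the
coordinate vectors. -/
lemma clm_apply_eq_sum {n : ℕ} {F : Type*} [NormedAddCommGroup F] [NormedSpace ℝ F]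
    (L : (Fin n → ℝ) →L[ℝ] F) (w : Fin n → ℝ) :
    L w = ∑ m, w m • L (Pi.single m 1) := by
  conv_lhs => rw [← Finset.univ_sum_single w]
  rw [map_sum]
  refine Finset.sum_congr rfl fun m _ => ?_
  have h3 : (Pi.single m (w m) : Fin n → ℝ) = w m • (Pi.single m (1 : ℝ) : Fin n → ℝ) := by
    rw [← Pi.single_smul, smul_eq_mul, mul_one]
  rw [h3, _root_.map_smul]

end ThomasAux

namespace ThomasHelp
open Finset Matrix ThomasLocal ThomasAux

variable {n : ℕ}

lemma covD_coord (G : Chr n) (a b : Fin n) (x : Esp n) (k : Fin n) :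
    covD G (coordVF a) (coordVF b) x k = G x a b k := by
  unfold covD coordVF pdE
  have h0 : ∀ i : Fin n,
      fderiv ℝ (fun _ : Esp n => if b = k then (1:ℝ) else 0) x (Pi.single i 1) = 0 := by
    intro i; rw [fderiv_fun_const]; rfl
  simp [h0, Finset.sum_ite_eq, Finset.mul_sum]

lemma pushVF_coord (φ ψ : Esp n → Esp n) (a : Fin n) (y : Esp n) (i : Fin n) :
    pushVF φ ψ (coordVF a) y i = Jmat φ (ψ y) i a := by
  unfold pushVF coordVF
  simp [Matrix.mulVec, dotProduct, mul_ite, Finset.sum_ite_eq]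

lemma fderiv_component (f : Esp n → Esp n) {x : Esp n} (hf : DifferentiableAt ℝ f x)
    (i : Fin n) :
    fderiv ℝ (fun y => f y i) x
      = (ContinuousLinearMap.proj (R := ℝ) (φ := fun _ : Fin n => ℝ) i).comp
        (fderiv ℝ f x) := by
  have h : (fun y => f y i)
      = (ContinuousLinearMap.proj (R := ℝ) (φ := fun _ : Fin n => ℝ) i) ∘ f := rfl
  rw [h, fderiv_comp x (ContinuousLinearMap.differentiableAt _) hf,
    ContinuousLinearMap.fderiv]

lemma Jmat_eq_fderiv (f : Esp n → Esp n) {x : Esp n} (hf : DifferentiableAt ℝ f x)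
    (i j : Fin n) : Jmat f x i j = fderiv ℝ f x (Pi.single j 1) i := by
  show pdE (fun y => f y i) j x = _
  unfold pdE
  rw [fderiv_component f hf i]
  rfl

lemma fderiv_eq_mulVec (f : Esp n → Esp n) {x : Esp n} (hf : DifferentiableAt ℝ f x)
    (w : Esp n) : fderiv ℝ f x w = (Jmat f x).mulVec w := by
  funext i
  rw [clm_apply_eq_sum (fderiv ℝ f x) w]
  rw [Finset.sum_apply]
  unfold Matrix.mulVec dotProduct
  refine Finset.sum_congr rfl fun j _ => ?_
  rw [Pi.smul_apply, smul_eq_mul, ← Jmat_eq_fderiv f hf i j, mul_comm]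

end ThomasHelp
open ThomasLocal in
/-- naturality of the horizontal lift in the classical local model
(`m = 0`, `n ≥ 2`).  If `φ : U → V` is a smooth diffeomorphism (with smooth inverse `ψ`),
`Γ` is a smooth torsion-free connection on `V` and `Γ'` is the pullback connection on `U`
(determined by `Dφ_x ((φ*∇)_X Y)(x) = (∇_{φ_*X} φ_*Y)(φ(x))` for all smooth vector
fields `X`, `Y` on `U`), then for every smooth vector field `X` on `V` the horizontal
lift `(φ*X)^h` with respect to `Γ'` is `φ̃`-related to the horizontal lift `X^h` with
respect to `Γ`, where `φ̃(x⁰,x) = (x⁰ + log |det Dφ_x|, φ(x))`. -/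
theorem horizontal_lift_natural (n : ℕ) (hn : 2 ≤ n)
    (U V : Set (Esp n)) (hU : IsOpen U) (hV : IsOpen V)
    (φ ψ : Esp n → Esp n)
    (hφ : ContDiffOn ℝ (⊤ : ℕ∞) φ U) (hφmap : Set.MapsTo φ U V)
    (hψ : ContDiffOn ℝ (⊤ : ℕ∞) ψ V) (hψmap : Set.MapsTo ψ V U)
    (hinv₁ : ∀ x ∈ U, ψ (φ x) = x) (hinv₂ : ∀ y ∈ V, φ (ψ y) = y)
    (Γ : Chr n)
    (hΓsmooth : ∀ i j k, ContDiffOn ℝ (⊤ : ℕ∞) (fun x => Γ x i j k) V)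
    (hΓsym : ∀ x i j k, Γ x i j k = Γ x j i k)
    (Γ' : Chr n)
    (hΓ' : ∀ X Y : VF n,
      (∀ i, ContDiffOn ℝ (⊤ : ℕ∞) (fun x => X x i) U) →
      (∀ i, ContDiffOn ℝ (⊤ : ℕ∞) (fun x => Y x i) U) →
      ∀ x ∈ U, ∀ k : Fin n,
        (Jmat φ x).mulVec (fun j => covD Γ' X Y x j) k =
          covD Γ (pushVF φ ψ X) (pushVF φ ψ Y) (φ x) k) :
    ∀ X : VF n, (∀ i, ContDiffOn ℝ (⊤ : ℕ∞) (fun y => X y i) V) →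
      ∀ p : Tsp n, p.2 ∈ U →
        fderiv ℝ (tlift φ) p (hvec Γ' (pbVF φ X) p) = hvec Γ X (tlift φ p) := by
  intro X hX p hp
  have hxU : p.2 ∈ U := hp
  set x : Esp n := p.2 with hxdef
  have hyV : φ x ∈ V := hφmap hxU
  have hψφ : ψ (φ x) = x := hinv₁ x hxU
  -- basic differentiability
  have hφct : ContDiffAt ℝ (⊤ : ℕ∞) φ x := hφ.contDiffAt (hU.mem_nhds hxU)
  have hφd : DifferentiableAt ℝ φ x := hφct.differentiableAt (by simp)
  have hψct : ContDiffAt ℝ (⊤ : ℕ∞) ψ (φ x) := hψ.contDiffAt (hV.mem_nhds hyV)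
  have hψd : DifferentiableAt ℝ ψ (φ x) := hψct.differentiableAt (by simp)
  set J : Matrix (Fin n) (Fin n) ℝ := Jmat φ x with hJdef
  set Jψ : Matrix (Fin n) (Fin n) ℝ := Jmat ψ (φ x) with hJψdef
  -- chain rule : Jψ * J = 1
  have hcomp : Jψ * J = 1 := by
    have hev : (fun y => ψ (φ y)) =ᶠ[nhds x] (id : Esp n → Esp n) := by
      filter_upwards [hU.mem_nhds hxU] with z hz using hinv₁ z hz
    have h1 : fderiv ℝ (ψ ∘ φ) x = ContinuousLinearMap.id ℝ (Esp n) := by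
      rw [show (ψ ∘ φ) = fun y => ψ (φ y) from rfl, hev.fderiv_eq, fderiv_id]
    have h2 : fderiv ℝ (ψ ∘ φ) x = (fderiv ℝ ψ (φ x)).comp (fderiv ℝ φ x) :=
      fderiv_comp x hψd hφd
    ext i j
    have h3 := congrArg (fun L : Esp n →L[ℝ] Esp n => L (Pi.single j 1) i) (h1.symm.trans h2)
    simp only [ContinuousLinearMap.id_apply, ContinuousLinearMap.coe_comp',
      Function.comp_apply] at h3
    rw [ThomasHelp.fderiv_eq_mulVec φ hφd (Pi.single j 1),
      ThomasHelp.fderiv_eq_mulVec ψ hψd _, Matrix.mulVec_mulVec] at h3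
    rw [Matrix.one_apply]
    simp only [Matrix.mulVec_single, mul_one, Pi.single_apply] at h3
    rw [h3]; simp only [MulOpposite.op_one, one_smul, Matrix.col_apply, hJψdef, hJdef]
  have hdetU : IsUnit J.det := Matrix.isUnit_det_of_left_inverse hcomp
  have hdet0 : J.det ≠ 0 := hdetU.ne_zero
  have hJJi : J * J⁻¹ = 1 := Matrix.mul_nonsing_inv _ hdetU
  have hJiJ : J⁻¹ * J = 1 := Matrix.nonsing_inv_mul _ hdetU
  -- smoothness of the Jacobian entries
  have hentry : ∀ k j : Fin n, ContDiffAt ℝ (⊤ : ℕ∞) (fun z => Jmat φ z k j) x := by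
    intro k j
    have hk : ContDiffAt ℝ (⊤ : ℕ∞) (fun y => φ y k) x :=
      (ContinuousLinearMap.proj (R := ℝ) (φ := fun _ : Fin n => ℝ) k).contDiff.contDiffAt.comp
        x hφct
    have hder : ContDiffAt ℝ (⊤ : ℕ∞) (fderiv ℝ (fun y => φ y k)) x :=
      hk.fderiv_right (by exact_mod_cast le_top)
    exact (ContinuousLinearMap.apply ℝ ℝ (Pi.single j 1)).contDiff.contDiffAt.comp x hder
  have hDdiff : ∀ k j : Fin n, DifferentiableAt ℝ (fun z => Jmat φ z k j) x :=
    fun k j => (hentry k j).differentiableAt (by simp)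
  set D : Fin n → Fin n → Fin n → ℝ :=
    fun a k j => fderiv ℝ (fun z => Jmat φ z k j) x (Pi.single a 1) with hDdef
  -- derivative of the full Jacobian matrix
  set F : Esp n → Fin n → Fin n → ℝ := fun z k j => Jmat φ z k j with hFdef
  set DF : Esp n →L[ℝ] (Fin n → Fin n → ℝ) :=
    ContinuousLinearMap.pi
      (fun k => ContinuousLinearMap.pi (fun j => fderiv ℝ (fun z => Jmat φ z k j) x))
    with hDFdef
  have hF : HasFDerivAt F DF x :=
    hasFDerivAt_pi.2 fun k => hasFDerivAt_pi.2 fun j => (hDdiff k j).hasFDerivAt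
  have hDF_apply : ∀ (w : Esp n) (k j : Fin n),
      DF w k j = fderiv ℝ (fun z => Jmat φ z k j) x w := by
    intro w k j; rw [hDFdef]; simp [ContinuousLinearMap.pi_apply]
  have hdetF : HasFDerivAt (fun z => (Jmat φ z).det)
      (((ThomasAux.detCML n).linearDeriv (F x)).comp DF) x := by
    have h := ((ThomasAux.detCML n).hasFDerivAt (F x)).comp x hF
    have heq : (⇑(ThomasAux.detCML n)) ∘ F = fun z => (Jmat φ z).det := by
      funext z; exact ThomasAux.detCML_apply (F z)
    rw [← heq]; exact h
  set Lg : Esp n →L[ℝ] ℝ :=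
    (J.det)⁻¹ • (((ThomasAux.detCML n).linearDeriv (F x)).comp DF) with hLgdef
  have hg : HasFDerivAt (fun z => Real.log |(Jmat φ z).det|) Lg x := by
    have heq : (fun z => Real.log |(Jmat φ z).det|)
        = Real.log ∘ (fun z => (Jmat φ z).det) := by
      funext z; simp [Function.comp, Real.log_abs]
    rw [heq, hLgdef]
    exact (Real.hasDerivAt_log hdet0).comp_hasFDerivAt x hdetF
  -- value of Lg on coordinate vectors : Jacobi's formula
  have hinv_entry : ∀ u v : Fin n, J⁻¹ u v = (J.det)⁻¹ * J.adjugate u v := by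
    intro u v
    rw [Matrix.inv_def, Ring.inverse_eq_inv']
    simp [smul_eq_mul]
  have hLa : ∀ a : Fin n, Lg (Pi.single a 1) = ∑ m, ∑ k, J⁻¹ m k * D a k m := by
    intro a
    have h1 : Lg (Pi.single a 1)
        = (J.det)⁻¹ * ((ThomasAux.detCML n).linearDeriv (F x)) (DF (Pi.single a 1)) := by
      rw [hLgdef]; simp
    rw [h1, ContinuousMultilinearMap.linearDeriv_apply]
    have h2 : ∀ i : Fin n,
        (ThomasAux.detCML n) (Function.update (F x) i (DF (Pi.single a 1) i))
          = (J.updateRow i (fun j => D a i j)).det := by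
      intro i
      have hv : DF (Pi.single a 1) i = fun j => D a i j := by
        funext j; rw [hDF_apply]
      rw [ThomasAux.detCML_apply, hv]
      rfl
    rw [Finset.sum_congr rfl fun i _ => h2 i]
    calc (J.det)⁻¹ * ∑ i, (J.updateRow i (fun j => D a i j)).det
        = (J.det)⁻¹ * ∑ i, ∑ j, D a i j * J.adjugate j i := by
          rw [Finset.sum_congr rfl fun i _ => ThomasAux.det_updateRow_expand J i _]
      _ = ∑ i, ∑ j, (J.det)⁻¹ * (D a i j * J.adjugate j i) := by
          rw [Finset.mul_sum]
          exact Finset.sum_congr rfl fun i _ => Finset.mul_sum _ _ _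
      _ = ∑ j, ∑ i, J⁻¹ j i * D a i j := by
          rw [Finset.sum_comm]
          exact Finset.sum_congr rfl fun j _ => Finset.sum_congr rfl fun i _ => by
            rw [hinv_entry]; ring
  -- the derivative formula for the pushed-forward entries
  have hpd_entry : ∀ (k b i : Fin n),
      pdE (fun y => Jmat φ (ψ y) k b) i (φ x) = ∑ m, Jψ m i * D m k b := by
    intro k b i
    have hDψ : DifferentiableAt ℝ (fun z => Jmat φ z k b) (ψ (φ x)) := by
      rw [hψφ]; exact hDdiff k b
    unfold pdE
    rw [show (fun y => Jmat φ (ψ y) k b) = (fun z => Jmat φ z k b) ∘ ψ from rfl,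
      fderiv_comp (φ x) hDψ hψd]
    simp only [ContinuousLinearMap.coe_comp', Function.comp_apply]
    rw [hψφ, ThomasHelp.fderiv_eq_mulVec ψ hψd,
      ThomasAux.clm_apply_eq_sum (fderiv ℝ (fun z => Jmat φ z k b) x) _]
    refine Finset.sum_congr rfl fun m _ => ?_
    simp only [Matrix.mulVec_single, smul_eq_mul, mul_one]
    simp only [MulOpposite.op_one, one_smul, Matrix.col_apply]; rfl
  -- the transformed Christoffel relation
  have hkey : ∀ a b k : Fin n, ∑ j, J k j * Γ' x a b j
      = D a k b + ∑ i, ∑ j, J i a * J j b * Γ (φ x) i j k := by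
    intro a b k
    have h := hΓ' (coordVF a) (coordVF b) (fun i => contDiffOn_const)
      (fun i => contDiffOn_const) x hxU k
    have hL : (Jmat φ x).mulVec (fun j => covD Γ' (coordVF a) (coordVF b) x j) k
        = ∑ j, J k j * Γ' x a b j := by
      simp only [Matrix.mulVec, dotProduct, ThomasHelp.covD_coord]; rfl
    have hR : covD Γ (pushVF φ ψ (coordVF a)) (pushVF φ ψ (coordVF b)) (φ x) k
        = D a k b + ∑ i, ∑ j, J i a * J j b * Γ (φ x) i j k := by
      unfold covD
      congr 1
      · -- first sum gives D a k b
        have hBf : (fun y => pushVF φ ψ (coordVF b) y k) = fun y => Jmat φ (ψ y) k b := by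
          funext y; rw [ThomasHelp.pushVF_coord]
        calc ∑ i, pushVF φ ψ (coordVF a) (φ x) i
                * pdE (fun y => pushVF φ ψ (coordVF b) y k) i (φ x)
            = ∑ i, J i a * ∑ m, Jψ m i * D m k b := by
              refine Finset.sum_congr rfl fun i _ => ?_
              rw [ThomasHelp.pushVF_coord, hψφ, hBf, hpd_entry]
          _ = ∑ m, (∑ i, Jψ m i * J i a) * D m k b := by
              simp_rw [Finset.mul_sum]
              rw [Finset.sum_comm]
              exact Finset.sum_congr rfl fun m _ =>
                (by rw [Finset.sum_mul]; exact Finset.sum_congr rfl fun i _ => by ring)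
          _ = ∑ m, ((1 : Matrix (Fin n) (Fin n) ℝ) m a) * D m k b := by
              refine Finset.sum_congr rfl fun m _ => ?_
              rw [← hcomp, Matrix.mul_apply]
          _ = D a k b := by simp [Matrix.one_apply]
      · refine Finset.sum_congr rfl fun i _ => Finset.sum_congr rfl fun j _ => ?_
        rw [ThomasHelp.pushVF_coord, ThomasHelp.pushVF_coord, hψφ]
    calc ∑ j, J k j * Γ' x a b j = _ := hL.symm
      _ = _ := h
      _ = _ := hR
  -- invert to get the transformation of Γ'
  have hGamma' : ∀ a b m' : Fin n, Γ' x a b m'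
      = ∑ k, J⁻¹ m' k * (D a k b + ∑ i, ∑ j, J i a * J j b * Γ (φ x) i j k) := by
    intro a b m'
    have h1 : ∑ k, J⁻¹ m' k * (∑ j, J k j * Γ' x a b j) = Γ' x a b m' := by
      have h2 : ∑ k, J⁻¹ m' k * (∑ j, J k j * Γ' x a b j)
          = ∑ j, (∑ k, J⁻¹ m' k * J k j) * Γ' x a b j := by
        simp_rw [Finset.mul_sum]
        rw [Finset.sum_comm]
        exact Finset.sum_congr rfl fun j _ =>
          (by rw [Finset.sum_mul]; exact Finset.sum_congr rfl fun k _ => by ring)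
      rw [h2]
      have h3 : ∀ j, (∑ k, J⁻¹ m' k * J k j) = (1 : Matrix (Fin n) (Fin n) ℝ) m' j :=
        fun j => by rw [← hJiJ, Matrix.mul_apply]
      rw [Finset.sum_congr rfl fun j _ => by rw [h3 j]]
      simp [Matrix.one_apply]
    rw [← h1]
    exact Finset.sum_congr rfl fun k _ => by rw [hkey a b k]
  -- transformation of the contracted symbols
  have hclaw : ∀ a : Fin n, csum Γ' x a
      = (∑ i, J i a * csum Γ (φ x) i) + Lg (Pi.single a 1) := by
    intro a
    have e1 : csum Γ' x a
        = ∑ s, ∑ k, J⁻¹ s k * (D a k s + ∑ i, ∑ j, J i a * J j s * Γ (φ x) i j k) :=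
      Finset.sum_congr rfl fun s _ => hGamma' a s s
    have e2 : csum Γ' x a = (∑ s, ∑ k, J⁻¹ s k * D a k s)
        + ∑ s, ∑ k, J⁻¹ s k * ∑ i, ∑ j, J i a * J j s * Γ (φ x) i j k := by
      rw [e1, ← Finset.sum_add_distrib]
      exact Finset.sum_congr rfl fun s _ => by
        rw [← Finset.sum_add_distrib]
        exact Finset.sum_congr rfl fun k _ => by ring
    have e3 : ∑ s, ∑ k, (J⁻¹ s k * ∑ i, ∑ j, J i a * J j s * Γ (φ x) i j k)
        = ∑ i, J i a * csum Γ (φ x) i := by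
      have step1 : ∀ s : Fin n, ∑ k, (J⁻¹ s k * ∑ i, ∑ j, J i a * J j s * Γ (φ x) i j k)
          = ∑ i, ∑ j, ∑ k, J i a * Γ (φ x) i j k * (J j s * J⁻¹ s k) := by
        intro s
        simp_rw [Finset.mul_sum]
        rw [Finset.sum_comm]
        refine Finset.sum_congr rfl fun i _ => ?_
        rw [Finset.sum_comm]
        exact Finset.sum_congr rfl fun j _ => Finset.sum_congr rfl fun k _ => by ring
      rw [Finset.sum_congr rfl fun s _ => step1 s]
      have step2 : ∑ s, ∑ i, ∑ j, ∑ k, J i a * Γ (φ x) i j k * (J j s * J⁻¹ s k)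
          = ∑ i, ∑ j, ∑ k, J i a * Γ (φ x) i j k * (∑ s, J j s * J⁻¹ s k) := by
        rw [Finset.sum_comm]
        refine Finset.sum_congr rfl fun i _ => ?_
        rw [Finset.sum_comm]
        refine Finset.sum_congr rfl fun j _ => ?_
        rw [Finset.sum_comm]
        exact Finset.sum_congr rfl fun k _ => by rw [← Finset.mul_sum]
      rw [step2]
      have step3 : ∀ j k : Fin n, (∑ s, J j s * J⁻¹ s k)
          = (1 : Matrix (Fin n) (Fin n) ℝ) j k := fun j k => by rw [← hJJi, Matrix.mul_apply]
      calc ∑ i, ∑ j, ∑ k, J i a * Γ (φ x) i j k * (∑ s, J j s * J⁻¹ s k)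
          = ∑ i, ∑ j, ∑ k, J i a * Γ (φ x) i j k
              * ((1 : Matrix (Fin n) (Fin n) ℝ) j k) := by
            exact Finset.sum_congr rfl fun i _ => Finset.sum_congr rfl fun j _ =>
              Finset.sum_congr rfl fun k _ => by rw [step3]
        _ = ∑ i, J i a * csum Γ (φ x) i := by
            refine Finset.sum_congr rfl fun i _ => ?_
            simp [Matrix.one_apply, mul_ite, mul_one, mul_zero, csum, Finset.mul_sum]
    rw [e2, e3, hLa, add_comm]
  -- derivative of the lifted map
  have hsnd : HasFDerivAt (fun q : Tsp n => q.2) (ContinuousLinearMap.snd ℝ ℝ (Esp n)) p :=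
    hasFDerivAt_snd
  have hgc : HasFDerivAt (fun q : Tsp n => Real.log |(Jmat φ q.2).det|)
      (Lg.comp (ContinuousLinearMap.snd ℝ ℝ (Esp n))) p := by have := hg.comp p hsnd; exact this
  have hφc : HasFDerivAt (fun q : Tsp n => φ q.2)
      ((fderiv ℝ φ x).comp (ContinuousLinearMap.snd ℝ ℝ (Esp n))) p :=
    (hφd.hasFDerivAt).comp p hsnd
  have htl : HasFDerivAt (tlift φ)
      (((ContinuousLinearMap.fst ℝ ℝ (Esp n))
          + Lg.comp (ContinuousLinearMap.snd ℝ ℝ (Esp n))).prod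
        ((fderiv ℝ φ x).comp (ContinuousLinearMap.snd ℝ ℝ (Esp n)))) p :=
    ((hasFDerivAt_fst).add hgc).prodMk hφc
  rw [htl.fderiv]
  -- final computation
  set X' : Fin n → ℝ := pbVF φ X x with hX'def
  have hJX' : J.mulVec X' = fun i => X (φ x) i := by
    have : X' = (J⁻¹).mulVec (fun i => X (φ x) i) := rfl
    rw [this, Matrix.mulVec_mulVec, hJJi, Matrix.one_mulVec]
  have hfX' : fderiv ℝ φ x X' = fun i => X (φ x) i := by
    rw [ThomasHelp.fderiv_eq_mulVec φ hφd, ← hJdef, hJX']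
  have happ : (((ContinuousLinearMap.fst ℝ ℝ (Esp n))
          + Lg.comp (ContinuousLinearMap.snd ℝ ℝ (Esp n))).prod
        ((fderiv ℝ φ x).comp (ContinuousLinearMap.snd ℝ ℝ (Esp n))))
      (hvec Γ' (pbVF φ X) p)
      = ((hvec Γ' (pbVF φ X) p).1 + Lg (hvec Γ' (pbVF φ X) p).2,
          fderiv ℝ φ x (hvec Γ' (pbVF φ X) p).2) := by
    simp [ContinuousLinearMap.prod_apply]
  rw [happ]
  have hv1 : (hvec Γ' (pbVF φ X) p).1 = -∑ i, X' i * csum Γ' x i := rfl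
  have hv2 : (hvec Γ' (pbVF φ X) p).2 = X' := rfl
  have hrhs : hvec Γ X (tlift φ p)
      = (-∑ i, X (φ x) i * csum Γ (φ x) i, fun i => X (φ x) i) := rfl
  rw [hv1, hv2, hrhs]
  refine Prod.ext ?_ ?_
  · -- the x⁰ components agree
    show -∑ i, X' i * csum Γ' x i + Lg X' = -∑ i, X (φ x) i * csum Γ (φ x) i
    have hLgX' : Lg X' = ∑ i, X' i * Lg (Pi.single i 1) := by
      rw [ThomasAux.clm_apply_eq_sum Lg X']
      exact Finset.sum_congr rfl fun i _ => by rw [smul_eq_mul]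
    have hexp : ∑ i, X' i * csum Γ' x i
        = (∑ i, ∑ j, X' i * (J j i * csum Γ (φ x) j)) + ∑ i, X' i * Lg (Pi.single i 1) := by
      rw [← Finset.sum_add_distrib]
      refine Finset.sum_congr rfl fun i _ => ?_
      rw [hclaw i, mul_add, Finset.mul_sum]
    have hmain : ∑ i, ∑ j, X' i * (J j i * csum Γ (φ x) j)
        = ∑ j, X (φ x) j * csum Γ (φ x) j := by
      rw [Finset.sum_comm]
      refine Finset.sum_congr rfl fun j _ => ?_
      have : (J.mulVec X') j = X (φ x) j := by rw [hJX']
      rw [← this]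
      unfold Matrix.mulVec dotProduct
      rw [Finset.sum_mul]
      exact Finset.sum_congr rfl fun i _ => by ring
    rw [hLgX', hexp, hmain]
    ring
  · -- the base components agree
    show fderiv ℝ φ x X' = fun i => X (φ x) i
    exact hfX'
end
end

section
/- Let n ≥ 1, let U ⊆ ℝⁿ be open, and let Γ̂ be any smooth Christoffel symbols Γ̂^c_{ab} : ℝ × U → ℝ (a, b, c from 0 to n) whose values are independent of the coordinate x⁰. Let λ, δ ∈ ℝ, let f : ℝ × U → ℝ be smooth with ∂_0 f = λ f, and let S be a smooth symmetric contravariant tensor field of degree k on ℝ × U whose components satisfy ∂_0 S^{a_1…a_k} = δ S^{a_1…a_k}. Then the full contraction ⟨S, ∇̂_s^k f⟩ = Σ S^{a_1…a_k} (∇̂_s^k f)_{a_1…a_k} satisfies ∂_0 ⟨S, ∇̂_s^k f⟩ = (λ + δ) ⟨S, ∇̂_s^k f⟩, where ∇̂_s^k f is the k-fold symmetrized covariant derivative of f with respect to Γ̂. (This is the (λ+δ)-equivariance underlying the well-definedness of the quantization formula Q_M(∇,S)(f)~ = ⟨S̃, ∇̃_s^k f̃⟩ in the main theorem.) -/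
noncomputable section

namespace ThomasLocal

open Finset

/-- Christoffel symbols of an arbitrary connection on (an open subset of) `ℝ × ℝⁿ`;
convention: `G p a b c = Γ̂^c_{ab}(p)` with indices in `Option (Fin n)`
(`none` is the index `0`). -/
abbrev ChrT (n : ℕ) := Tsp n → Option (Fin n) → Option (Fin n) → Option (Fin n) → ℝ

/-- Symmetric covariant tensor fields on `ℝ × ℝⁿ`, given through their components at
index strings `ℕ → Option (Fin n)` (a tensor of degree `d` only depends on the first
`d` positions). -/
abbrev CT (n : ℕ) := Tsp n → (ℕ → Option (Fin n)) → ℝ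

/-- Updating position `r` of an index string. -/
def updO {n : ℕ} (I : ℕ → Option (Fin n)) (r : ℕ) (b : Option (Fin n)) :
    ℕ → Option (Fin n) := fun k => if k = r then b else I k

/-- The covariant derivative of a degree-`d` covariant tensor field:
`(∇̂T)_{a b₁…b_d} = ∂_a T_{b₁…b_d} − Σ_{r=1}^{d} Σ_c Γ̂^c_{a b_r} T_{b₁…c…b_d}`
(the new index `a` is in position `0`). -/
def covCT {n : ℕ} (G : ChrT n) (d : ℕ) (T : CT n) : CT n := fun p I =>
  pdT (fun q => T q (fun k => I (k + 1))) (I 0) p -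
    ∑ r ∈ Finset.range d, ∑ c,
      G p (I 0) (I (r + 1)) c * T p (updO (fun k => I (k + 1)) r c)

/-- Symmetrization of a degree-`d` covariant tensor field over its `d` indices. -/
def symCT {n : ℕ} (d : ℕ) (T : CT n) : CT n := fun p I =>
  ((d.factorial : ℝ))⁻¹ *
    ∑ σ : Equiv.Perm (Fin d),
      T p (fun k => if h : k < d then I ((σ ⟨k, h⟩ : Fin d) : ℕ) else I k)

/-- The iterated symmetrized covariant derivative `∇̂_s^k f` of a function `f`
(a degree-`0` covariant tensor field). -/
def nabS {n : ℕ} (G : ChrT n) (f : Tsp n → ℝ) : ℕ → CT n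
  | 0 => fun p _ => f p
  | k + 1 => symCT (k + 1) (covCT G k (nabS G f k))

/-- Full contraction `⟨S, T⟩ = Σ_{a₁…a_k} S^{a₁…a_k} T_{a₁…a_k}` of a degree-`k`
contravariant tensor with a degree-`k` covariant tensor. -/
def contrK {n : ℕ} (k : ℕ) (S : Tsp n → (Fin k → Option (Fin n)) → ℝ) (T : CT n)
    (p : Tsp n) : ℝ :=
  ∑ I : Fin k → Option (Fin n),
    S p I * T p (fun r => if h : r < k then I ⟨r, h⟩ else none)

end ThomasLocal

namespace ThomasLocal

section Aux

variable {n : ℕ} {U : Set (Esp n)}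

/-- The domain `ℝ × U` is open. -/
lemma openO (hU : IsOpen U) : IsOpen ((Set.univ : Set ℝ) ×ˢ U) := isOpen_univ.prod hU

lemma memO {p : Tsp n} (hp : p.2 ∈ U) : p ∈ ((Set.univ : Set ℝ) ×ˢ U) := ⟨trivial, hp⟩

lemma diffAtO (hU : IsOpen U) {F : Type*} [NormedAddCommGroup F] [NormedSpace ℝ F]
    {g : Tsp n → F} (hg : ContDiffOn ℝ (⊤ : ℕ∞) g ((Set.univ : Set ℝ) ×ˢ U))
    {p : Tsp n} (hp : p.2 ∈ U) : DifferentiableAt ℝ g p :=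
  (hg.contDiffAt ((openO hU).mem_nhds (memO hp))).differentiableAt (by simp)

lemma fderivO_smooth (hU : IsOpen U) {g : Tsp n → ℝ}
    (hg : ContDiffOn ℝ (⊤ : ℕ∞) g ((Set.univ : Set ℝ) ×ˢ U)) :
    ContDiffOn ℝ (⊤ : ℕ∞) (fderiv ℝ g) ((Set.univ : Set ℝ) ×ˢ U) :=
  ((contDiffOn_infty_iff_fderiv_of_isOpen (openO hU)).1 hg).2

lemma pdT_smoothO (hU : IsOpen U) {g : Tsp n → ℝ}
    (hg : ContDiffOn ℝ (⊤ : ℕ∞) g ((Set.univ : Set ℝ) ×ˢ U)) (a : Option (Fin n)) :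
    ContDiffOn ℝ (⊤ : ℕ∞) (pdT g a) ((Set.univ : Set ℝ) ×ˢ U) :=
  (fderivO_smooth hU hg).clm_apply contDiffOn_const

/-- Clairaut on the open set. -/
lemma pd_commO (hU : IsOpen U) {g : Tsp n → ℝ}
    (hg : ContDiffOn ℝ (⊤ : ℕ∞) g ((Set.univ : Set ℝ) ×ˢ U))
    {p : Tsp n} (hp : p.2 ∈ U) (v w : Tsp n) :
    fderiv ℝ (fun q => fderiv ℝ g q v) p w = fderiv ℝ (fun q => fderiv ℝ g q w) p v := by
  have hd : DifferentiableAt ℝ (fderiv ℝ g) p := diffAtO hU (fderivO_smooth hU hg) hp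
  have key : ∀ u z : Tsp n,
      fderiv ℝ (fun q => fderiv ℝ g q u) p z = fderiv ℝ (fderiv ℝ g) p z u := by
    intro u z
    rw [fderiv_clm_apply hd (differentiableAt_const u)]
    simp
  have hsym : IsSymmSndFDerivAt ℝ g p :=
    (hg.contDiffAt ((openO hU).mem_nhds (memO hp))).isSymmSndFDerivAt
      (by rw [minSmoothness_of_isRCLikeNormedField]; exact WithTop.coe_le_coe.2 (le_top : (2:ℕ∞) ≤ ⊤))
  rw [key, key, hsym.eq w v]

/-- The crucial predicate: smooth on `ℝ × U` and `∂₀ g = μ g` there. -/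
def GoodOn (U : Set (Esp n)) (μ : ℝ) (g : Tsp n → ℝ) : Prop :=
  ContDiffOn ℝ (⊤ : ℕ∞) g ((Set.univ : Set ℝ) ×ˢ U) ∧
    ∀ p : Tsp n, p.2 ∈ U → pdT g none p = μ * g p

lemma GoodOn.pd (hU : IsOpen U) {μ : ℝ} {g : Tsp n → ℝ} (h : GoodOn U μ g)
    (a : Option (Fin n)) : GoodOn U μ (pdT g a) := by
  refine ⟨pdT_smoothO hU h.1 a, fun p hp => ?_⟩
  have e1 : pdT (pdT g a) none p
      = fderiv ℝ (fun q => fderiv ℝ g q (dirT a)) p (dirT none) := rfl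
  rw [e1, pd_commO hU h.1 hp]
  have heq : (fun q => fderiv ℝ g q (dirT none)) =ᶠ[nhds p] (fun q => μ * g q) := by
    filter_upwards [(openO hU).mem_nhds (memO hp)] with q hq
    exact h.2 q hq.2
  rw [heq.fderiv_eq, fderiv_const_mul (diffAtO hU h.1 hp.out) μ]
  rfl

lemma GoodOn.sum {ι : Type*} {s : Finset ι} {μ : ℝ} {g : ι → Tsp n → ℝ}
    (hU : IsOpen U) (h : ∀ i ∈ s, GoodOn U μ (g i)) :
    GoodOn U μ (fun p => ∑ i ∈ s, g i p) := by
  refine ⟨ContDiffOn.sum (fun i hi => (h i hi).1), fun p hp => ?_⟩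
  have hd : ∀ i ∈ s, DifferentiableAt ℝ (g i) p := fun i hi => diffAtO hU (h i hi).1 hp
  have : pdT (fun p => ∑ i ∈ s, g i p) none p = ∑ i ∈ s, pdT (g i) none p := by
    unfold pdT
    rw [fderiv_fun_sum hd]
    simp
  rw [this, Finset.mul_sum]
  exact Finset.sum_congr rfl fun i hi => (h i hi).2 p hp

lemma GoodOn.sub {μ : ℝ} {g₁ g₂ : Tsp n → ℝ} (hU : IsOpen U)
    (h₁ : GoodOn U μ g₁) (h₂ : GoodOn U μ g₂) : GoodOn U μ (fun p => g₁ p - g₂ p) := by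
  refine ⟨h₁.1.sub h₂.1, fun p hp => ?_⟩
  have : pdT (fun p => g₁ p - g₂ p) none p = pdT g₁ none p - pdT g₂ none p := by
    unfold pdT
    rw [fderiv_fun_sub (diffAtO hU h₁.1 hp) (diffAtO hU h₂.1 hp)]
    simp
  rw [this, h₁.2 p hp, h₂.2 p hp]; ring

lemma GoodOn.const_mul {μ : ℝ} {g : Tsp n → ℝ} (hU : IsOpen U) (c : ℝ)
    (h : GoodOn U μ g) : GoodOn U μ (fun p => c * g p) := by
  refine ⟨contDiffOn_const.mul h.1, fun p hp => ?_⟩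
  have : pdT (fun p => c * g p) none p = c * pdT g none p := by
    unfold pdT
    rw [fderiv_const_mul (diffAtO hU h.1 hp) c]
    rfl
  rw [this, h.2 p hp]; ring

lemma GoodOn.mul {μ ν : ℝ} {g h : Tsp n → ℝ} (hU : IsOpen U)
    (hg : GoodOn U μ g) (hh : GoodOn U ν h) : GoodOn U (μ + ν) (fun p => g p * h p) := by
  refine ⟨hg.1.mul hh.1, fun p hp => ?_⟩
  have : pdT (fun p => g p * h p) none p = g p * pdT h none p + h p * pdT g none p := by
    unfold pdT
    rw [fderiv_fun_mul (diffAtO hU hg.1 hp) (diffAtO hU hh.1 hp)]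
    simp [mul_comm]
  rw [this, hg.2 p hp, hh.2 p hp]; ring

lemma GoodOn.gmul {μ : ℝ} {g : Tsp n → ℝ} (hU : IsOpen U) {G : ChrT n}
    {a b c : Option (Fin n)}
    (hGs : ContDiffOn ℝ (⊤ : ℕ∞) (fun p => G p a b c) ((Set.univ : Set ℝ) ×ˢ U))
    (hGi : ∀ (t t' : ℝ) (x : Esp n), G (t, x) a b c = G (t', x) a b c)
    (h : GoodOn U μ g) : GoodOn U μ (fun p => G p a b c * g p) := by
  refine ⟨hGs.mul h.1, fun p hp => ?_⟩
  have hzero : pdT (fun q => G q a b c) none p = 0 := by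
    have hdG : DifferentiableAt ℝ (fun q => G q a b c) p := diffAtO hU hGs hp
    have hcurve : HasDerivAt (fun t : ℝ => ((t, p.2) : Tsp n)) (dirT none) p.1 :=
      HasDerivAt.prodMk (hasDerivAt_id p.1) (hasDerivAt_const p.1 p.2)
    have hcomp : HasDerivAt (fun t : ℝ => G (t, p.2) a b c)
        (fderiv ℝ (fun q => G q a b c) p (dirT none)) p.1 := by
      have := hdG.hasFDerivAt.comp_hasDerivAt p.1 hcurve
      exact this
    have hconst : HasDerivAt (fun t : ℝ => G (t, p.2) a b c) 0 p.1 := by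
      have he : (fun t : ℝ => G (t, p.2) a b c) = fun _ => G (p.1, p.2) a b c :=
        funext fun t => hGi t p.1 p.2
      rw [he]; exact hasDerivAt_const _ _
    exact hcomp.unique hconst
  have : pdT (fun p => G p a b c * g p) none p =
      G p a b c * pdT g none p + g p * pdT (fun q => G q a b c) none p := by
    unfold pdT
    rw [fderiv_fun_mul (diffAtO hU hGs hp) (diffAtO hU h.1 hp)]
    simp [mul_comm]
  rw [this, hzero, h.2 p hp]; ring

lemma nabS_good (hU : IsOpen U) (G : ChrT n)
    (hGs : ∀ a b c, ContDiffOn ℝ (⊤ : ℕ∞) (fun p => G p a b c) ((Set.univ : Set ℝ) ×ˢ U))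
    (hGi : ∀ (t t' : ℝ) (x : Esp n) (a b c : Option (Fin n)),
      G (t, x) a b c = G (t', x) a b c)
    {lam : ℝ} {f : Tsp n → ℝ} (hf0 : GoodOn U lam f) :
    ∀ (k : ℕ) (I : ℕ → Option (Fin n)), GoodOn U lam (fun p => nabS G f k p I) := by
  intro k
  induction k with
  | zero => intro I; exact hf0
  | succ k ih =>
    intro I
    have hcov : ∀ J : ℕ → Option (Fin n),
        GoodOn U lam (fun p => covCT G k (nabS G f k) p J) := by
      intro J
      have h1 : GoodOn U lam
          (pdT (fun q => nabS G f k q (fun m => J (m + 1))) (J 0)) :=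
        (ih (fun m => J (m + 1))).pd hU (J 0)
      have h2 : GoodOn U lam (fun p => ∑ r ∈ Finset.range k, ∑ c,
          G p (J 0) (J (r + 1)) c * nabS G f k p (updO (fun m => J (m + 1)) r c)) := by
        refine GoodOn.sum hU fun r _ => GoodOn.sum hU fun c _ => ?_
        exact GoodOn.gmul hU (hGs _ _ _) (fun t t' x => hGi t t' x _ _ _) (ih _)
      exact h1.sub hU h2
    have hsum : GoodOn U lam (fun p => ∑ σ : Equiv.Perm (Fin (k + 1)),
        covCT G k (nabS G f k) p
          (fun m => if h : m < k + 1 then I ((σ ⟨m, h⟩ : Fin (k + 1)) : ℕ) else I m)) :=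
      GoodOn.sum hU fun σ _ => hcov _
    exact GoodOn.const_mul hU _ hsum

end Aux

end ThomasLocal

open ThomasLocal in
/-- let `n ≥ 1`, `U ⊆ ℝⁿ` open, and let `G` be smooth Christoffel symbols
on `ℝ × U` independent of `x⁰`.  If `f` is smooth with `∂_0 f = λ f` and `S` is a smooth
symmetric contravariant tensor field of degree `k` with `∂_0 S^{a₁…a_k} = δ S^{a₁…a_k}`,
then the full contraction `⟨S, ∇̂_s^k f⟩` satisfies
`∂_0 ⟨S, ∇̂_s^k f⟩ = (λ + δ) ⟨S, ∇̂_s^k f⟩` on `ℝ × U`. -/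
theorem contraction_equivariance (n : ℕ) (hn : 1 ≤ n)
    (U : Set (Esp n)) (hU : IsOpen U)
    (G : ChrT n)
    (hGsmooth : ∀ a b c, ContDiffOn ℝ (⊤ : ℕ∞) (fun p => G p a b c)
      ((Set.univ : Set ℝ) ×ˢ U))
    (hGindep : ∀ (t t' : ℝ) (x : Esp n) (a b c : Option (Fin n)),
      G (t, x) a b c = G (t', x) a b c)
    (lam δv : ℝ) (f : Tsp n → ℝ)
    (hf : ContDiffOn ℝ (⊤ : ℕ∞) f ((Set.univ : Set ℝ) ×ˢ U))
    (hfe : ∀ p : Tsp n, p.2 ∈ U → pdT f none p = lam * f p)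
    (k : ℕ) (S : Tsp n → (Fin k → Option (Fin n)) → ℝ)
    (hSsmooth : ∀ I, ContDiffOn ℝ (⊤ : ℕ∞) (fun p => S p I)
      ((Set.univ : Set ℝ) ×ˢ U))
    (hSsym : ∀ p (I : Fin k → Option (Fin n)) (σ : Equiv.Perm (Fin k)),
      S p (I ∘ σ) = S p I)
    (hSe : ∀ p : Tsp n, p.2 ∈ U → ∀ I, pdT (fun q => S q I) none p = δv * S p I) :
    ∀ p : Tsp n, p.2 ∈ U →
      pdT (contrK k S (nabS G f k)) none p =
        (lam + δv) * contrK k S (nabS G f k) p := by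
  have hΩ : IsOpen ((Set.univ : Set ℝ) ×ˢ U) := openO hU
  have hgood : GoodOn U (lam + δv) (fun p => contrK k S (nabS G f k) p) := by
    refine GoodOn.sum hU fun I _ => ?_
    have hS : GoodOn U δv (fun p => S p I) := ⟨hSsmooth I, fun p hp => hSe p hp I⟩
    have hT : GoodOn U lam (fun p => nabS G f k p
        (fun r => if h : r < k then I ⟨r, h⟩ else none)) :=
      nabS_good hU G hGsmooth hGindep ⟨hf, hfe⟩ k _
    have := GoodOn.mul hU hS hT
    rwa [add_comm] at this
  intro p hp
  exact hgood.2 p hp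
end
end

section
/- In the classical local model (m = 0, n ≥ 2) on an open set U ⊆ ℝⁿ: if Γ and Γ′ are smooth torsion-free connections on U that are projectively equivalent, i.e. there is a smooth 1-form α = α_i dx^i on U with Γ′^k_{ij} = Γ^k_{ij} + α_i δ^k_j + α_j δ^k_i for all i, j, k, then the associated Thomas connections on ℝ × U coincide: all Christoffel symbols Γ̃^c_{ab} and Γ̃′^c_{ab} (a, b, c from 0 to n) are equal. (Projective invariance of the Thomas connection.) -/
noncomputable section

open ThomasLocal in
/-- projective invariance of the Thomas connection in the classical local
model (`m = 0`, `n ≥ 2`).  If the smooth torsion-free connections `Γ` and `Γ'` on an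
open `U ⊆ ℝⁿ` are projectively equivalent, i.e.
`Γ'^k_{ij} = Γ^k_{ij} + α_i δ^k_j + α_j δ^k_i` on `U` for a smooth `1`-form `α`, then
all the Christoffel symbols of the associated Thomas connections coincide on `ℝ × U`. -/
theorem thomas_connection_projectively_invariant (n : ℕ) (hn : 2 ≤ n)
    (U : Set (Esp n)) (hU : IsOpen U)
    (Γ Γ' : Chr n)
    (hΓsmooth : ∀ i j k, ContDiffOn ℝ (⊤ : ℕ∞) (fun x => Γ x i j k) U)
    (hΓsym : ∀ x i j k, Γ x i j k = Γ x j i k)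
    (hΓ'smooth : ∀ i j k, ContDiffOn ℝ (⊤ : ℕ∞) (fun x => Γ' x i j k) U)
    (hΓ'sym : ∀ x i j k, Γ' x i j k = Γ' x j i k)
    (α : Esp n → Fin n → ℝ)
    (hα : ∀ i, ContDiffOn ℝ (⊤ : ℕ∞) (fun x => α x i) U)
    (hproj : ∀ x ∈ U, ∀ i j k : Fin n,
      Γ' x i j k =
        Γ x i j k + α x i * (if j = k then (1 : ℝ) else 0) +
          α x j * (if i = k then (1 : ℝ) else 0)) :
    ∀ x ∈ U, ∀ a b c : Option (Fin n), ΓT Γ x a b c = ΓT Γ' x a b c := by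
  have hPi : ∀ x ∈ U, ∀ i j k, PiInv Γ x i j k = PiInv Γ' x i j k := by
    intro x hx i j k
    have hne : ((n : ℝ) + 1) ≠ 0 := by positivity
    have hcs : ∀ i, csum Γ' x i = csum Γ x i + ((n : ℝ) + 1) * α x i := by
      intro i
      unfold csum
      rw [Finset.sum_congr rfl fun s _ => hproj x hx i s s]
      simp [Finset.sum_add_distrib, mul_ite, Finset.sum_ite_eq, Finset.mul_sum]
      ring
    simp only [PiInv, hproj x hx i j k, hcs]
    field_simp
    split_ifs <;> ring
  have hpd : ∀ x ∈ U, ∀ i j q,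
      pdE (fun y => PiInv Γ y i j q) q x = pdE (fun y => PiInv Γ' y i j q) q x := by
    intro x hx i j q
    unfold pdE
    congr 1
    apply Filter.EventuallyEq.fderiv_eq
    filter_upwards [hU.mem_nhds hx] with y hy
    exact hPi y hy i j q
  intro x hx a b c
  match a, b, c with
  | none, b, c => rfl
  | some i, none, c => rfl
  | some i, some j, some k => exact hPi x hx i j k
  | some i, some j, none =>
    show Γtop Γ x i j = Γtop Γ' x i j
    unfold Γtop
    congr 1
    congr 1
    · exact Finset.sum_congr rfl fun q _ => hpd x hx i j q
    · exact Finset.sum_congr rfl fun p _ => Finset.sum_congr rfl fun q _ => by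
        rw [hPi x hx q i p, hPi x hx p j q]
end
end
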